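/- Let Ω ⊆ ℂⁿ be a bounded convex d-balanced domain, z ∈ Ω, w ∈ ℂⁿ, and k ≥ h_{d,Ω}(−w). Then the point ((z₁ − w₁)/(2(1+k)^{d₁}), …, (zₙ − wₙ)/(2(1+k)^{dₙ})) lies in Ω. -/

import Mathlib

open Bornology

/-- The Minkowski function of a set `Ω` in a complex vector space. -/
noncomputable def mink {E : Type*} [SMul ℂ E] (Ω : Set E) (z : E) : ℝ :=
  sInf {t : ℝ | 0 < t ∧ (t : ℂ)⁻¹ • z ∈ Ω}

/-- `Ω` is balanced: `λ • z ∈ Ω` whenever `z ∈ Ω` and `‖λ‖ ≤ 1`. -/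
def Bal {E : Type*} [SMul ℂ E] (Ω : Set E) : Prop :=
  ∀ z ∈ Ω, ∀ l : ℂ, ‖l‖ ≤ 1 → l • z ∈ Ω

/-- The sublevel set `Ω(r) = {z : h_Ω(z) < r}`. -/
def sub' {E : Type*} [SMul ℂ E] (Ω : Set E) (r : ℝ) : Set E := {z | mink Ω z < r}
/-- `Ω` is `d`-balanced. -/
def dBal {ι : Type*} (d : ι → ℕ) (Ω : Set (ι → ℂ)) : Prop :=
  ∀ z ∈ Ω, ∀ l : ℂ, ‖l‖ ≤ 1 → (fun i => l ^ (d i) * z i) ∈ Ω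

/-- The `d`-Minkowski function of `Ω`. -/
noncomputable def dMink {ι : Type*} (d : ι → ℕ) (Ω : Set (ι → ℂ)) (z : ι → ℂ) : ℝ :=
  sInf {t : ℝ | 0 < t ∧ (fun i => z i / (t : ℂ) ^ (d i)) ∈ Ω}

/-- The sublevel set `Ω^d(r) = {z : h_{d,Ω}(z) < r}`. -/
def dSub {ι : Type*} (d : ι → ℕ) (Ω : Set (ι → ℂ)) (r : ℝ) : Set (ι → ℂ) :=
  {z | dMink d Ω z < r}

/-! Both `z / (1+k)^d` and `-w / (1+k)^d` lie in `Ω`: the first because `Ω` is `d`-balanced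
and `1 ≤ 1 + k`, the second because `h_{d,Ω}(-w) < 1 + k`, so some `t < 1 + k` has
`-w / t^d ∈ Ω`, and again by `d`-balancedness. The point in question is their midpoint. -/

open Filter Topology

section DBalanced

variable {ι : Type*} {d : ι → ℕ} {Ω : Set (ι → ℂ)}

theorem dBal.zero_mem (hbal : dBal d Ω) (hd : ∀ i, 1 ≤ d i) {z : ι → ℂ} (hz : z ∈ Ω) :
    (0 : ι → ℂ) ∈ Ω := by
  convert hbal z hz 0 (by simp) using 1
  funext i
  simp [zero_pow (Nat.one_le_iff_ne_zero.mp (hd i))]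

theorem dBal.div_pow_mem_of_le (hbal : dBal d Ω) {z : ι → ℂ} {s r : ℝ} (hs : 0 < s)
    (hsr : s ≤ r) (hz : (fun i => z i / (s : ℂ) ^ d i) ∈ Ω) :
    (fun i => z i / (r : ℂ) ^ d i) ∈ Ω := by
  have hr : 0 < r := hs.trans_le hsr
  have hl : ‖((s / r : ℝ) : ℂ)‖ ≤ 1 := by
    rw [Complex.norm_real, Real.norm_of_nonneg (by positivity)]
    exact div_le_one_of_le₀ hsr hr.le
  convert hbal _ hz _ hl using 2 with i
  have hsC : (s : ℂ) ≠ 0 := by exact_mod_cast hs.ne'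
  have hrC : (r : ℂ) ≠ 0 := by exact_mod_cast hr.ne'
  push_cast
  rw [div_pow]
  field_simp

theorem eventually_div_pow_mem (hd : ∀ i, 1 ≤ d i) (hO : IsOpen Ω) (h0 : (0 : ι → ℂ) ∈ Ω)
    (w : ι → ℂ) : ∀ᶠ t : ℝ in atTop, (fun i => w i / (t : ℂ) ^ d i) ∈ Ω := by
  have hlim : Tendsto (fun (t : ℝ) i => w i / (t : ℂ) ^ d i) atTop (𝓝 0) := by
    refine tendsto_pi_nhds.2 fun i => ?_
    have h := (Complex.continuous_ofReal.tendsto 0).comp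
      (tendsto_pow_atTop (α := ℝ) (Nat.one_le_iff_ne_zero.mp (hd i))).inv_tendsto_atTop
    simpa [Function.comp_def, div_eq_mul_inv] using h.const_mul (w i)
  exact hlim (hO.mem_nhds h0)

theorem dMink_nonneg (w : ι → ℂ) : 0 ≤ dMink d Ω w :=
  Real.sInf_nonneg fun _ ht => ht.1.le

theorem dBal.div_pow_mem_of_dMink_lt (hbal : dBal d Ω) (hd : ∀ i, 1 ≤ d i) (hO : IsOpen Ω)
    (h0 : (0 : ι → ℂ) ∈ Ω) {w : ι → ℂ} {r : ℝ} (hw : dMink d Ω w < r) :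
    (fun i => w i / (r : ℂ) ^ d i) ∈ Ω := by
  -- without this, `sInf ∅ = 0` would make `dMink d Ω w < r` carry no information
  have hne : {t : ℝ | 0 < t ∧ (fun i => w i / (t : ℂ) ^ d i) ∈ Ω}.Nonempty :=
    (((eventually_gt_atTop 0).and (eventually_div_pow_mem hd hO h0 w)).exists)
  obtain ⟨t, ⟨ht0, htw⟩, htr⟩ := exists_lt_of_csInf_lt hne hw
  exact hbal.div_pow_mem_of_le ht0 htr.le htw

end DBalanced

theorem stmt18_general {n : ℕ} (d : Fin n → ℕ) (hd : ∀ i, 1 ≤ d i) (Ω : Set (Fin n → ℂ))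
    (hO : IsOpen Ω) (hcv : Convex ℝ Ω) (hbal : dBal d Ω)
    (z w : Fin n → ℂ) (hz : z ∈ Ω) (k : ℝ) (hk : dMink d Ω (-w) ≤ k) :
    (fun i => (z i - w i) / (2 * ((1 + k : ℝ) : ℂ) ^ (d i))) ∈ Ω := by
  have hk0 : 0 ≤ k := (dMink_nonneg _).trans hk
  have hzk : (fun i => z i / ((1 + k : ℝ) : ℂ) ^ d i) ∈ Ω :=
    hbal.div_pow_mem_of_le one_pos (by linarith) (by simpa using hz)
  have hwk : (fun i => -w i / ((1 + k : ℝ) : ℂ) ^ d i) ∈ Ω :=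
    hbal.div_pow_mem_of_dMink_lt (w := -w) hd hO (hbal.zero_mem hd hz) (by linarith)
  convert hcv hzk hwk (by norm_num : (0 : ℝ) ≤ 1 / 2) (by norm_num) (add_halves 1) using 1
  funext i
  simp only [Pi.add_apply, Pi.smul_apply, Complex.real_smul]
  push_cast
  ring

/-- If `z ∈ Ω` and `k ≥ h_{d,Ω}(-w)`, then
`((z₁-w₁)/(2(1+k)^{d₁}), …, (zₙ-wₙ)/(2(1+k)^{dₙ})) ∈ Ω`. -/
theorem stmt18 {n : ℕ} (d : Fin n → ℕ) (hd : ∀ i, 1 ≤ d i) (Ω : Set (Fin n → ℂ))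
    (hO : IsOpen Ω) (hconn : IsConnected Ω) (hbd : IsBounded Ω)
    (hcv : Convex ℝ Ω) (hbal : dBal d Ω)
    (z w : Fin n → ℂ) (hz : z ∈ Ω) (k : ℝ) (hk : dMink d Ω (-w) ≤ k) :
    (fun i => (z i - w i) / (2 * ((1 + k : ℝ) : ℂ) ^ (d i))) ∈ Ω :=
  stmt18_general d hd Ω hO hcv hbal z w hz k hk
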